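/- arXiv:2203.00287 — 5 statements merged into one kernel-verified Lean document; each statement's English description precedes it below -/
import Mathlib

section
/- For the second derivative of F at the saddle point a⁻¹: F''(a⁻¹) = 2a² · sinh(ξ+iη)·sinh(ξ'+iη') / sinh(ξ+ξ'+i(η+η')), provided the right-hand side is well-defined (in particular z, z' ∉ {±√2} and z ≠ −z' when z ∈ (−√2,√2)). -/
open Complex

lemma helper_poly (A B u v : ℂ) (hu : u ≠ 0) (hv : v ≠ 0) (hA0 : A ≠ 0) (hB0 : B ≠ 0)
    (hA : A = u * v + 1) (hB : B = u * v - 1) :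
    -(2 * ((u + u⁻¹) / 2 + (v + v⁻¹) / 2) ^ 2) * (u * v) ^ 3 / A ^ 3
      - 2 * ((u + u⁻¹) / 2 - (v + v⁻¹) / 2) ^ 2 * (u * v) ^ 3 / B ^ 3
      + (u * v) ^ 2 =
    2 * (u * v) ^ 2 * ((u - u⁻¹) / 2) * ((v - v⁻¹) / 2) * (u * v * 2) / (A * B) := by
  have hA3 : A ^ 3 ≠ 0 := pow_ne_zero 3 hA0
  have hB3 : B ^ 3 ≠ 0 := pow_ne_zero 3 hB0
  have hAB3 : A ^ 3 * B ^ 3 ≠ 0 := mul_ne_zero hA3 hB3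
  have hAB : A * B ≠ 0 := mul_ne_zero hA0 hB0
  rw [div_sub_div _ _ hA3 hB3, div_add' _ _ _ hAB3, div_eq_div_iff hAB3 hAB]
  subst hA hB
  field_simp
  ring

lemma key_identity (u v : ℂ) (hu : u ≠ 0) (hv : v ≠ 0)
    (h1 : u * v + 1 ≠ 0) (h2 : u * v - 1 ≠ 0) :
    -(2 * ((u + u⁻¹) / 2 + (v + v⁻¹) / 2) ^ 2) / (1 + (u * v)⁻¹) ^ 3
      - 2 * ((u + u⁻¹) / 2 - (v + v⁻¹) / 2) ^ 2 / (1 - (u * v)⁻¹) ^ 3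
      + 1 / ((u * v)⁻¹) ^ 2 =
    2 * (u * v) ^ 2 * ((u - u⁻¹) / 2) * ((v - v⁻¹) / 2) / ((u * v - (u * v)⁻¹) / 2) := by
  have huv : u * v ≠ 0 := mul_ne_zero hu hv
  have d1 : 1 + (u * v)⁻¹ = (u * v + 1) / (u * v) := by field_simp
  have d2 : 1 - (u * v)⁻¹ = (u * v - 1) / (u * v) := by field_simp
  have d3 : u * v - (u * v)⁻¹ = (u * v + 1) * (u * v - 1) / (u * v) := by
    field_simp; ring
  have d4 : 1 / ((u * v)⁻¹) ^ 2 = (u * v) ^ 2 := by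
    rw [one_div, inv_pow, inv_inv]
  have t1 : -(2 * ((u + u⁻¹) / 2 + (v + v⁻¹) / 2) ^ 2) / ((u * v + 1) / (u * v)) ^ 3
      = -(2 * ((u + u⁻¹) / 2 + (v + v⁻¹) / 2) ^ 2) * (u * v) ^ 3 / (u * v + 1) ^ 3 := by
    rw [div_pow, div_div_eq_mul_div]
  have t2 : 2 * ((u + u⁻¹) / 2 - (v + v⁻¹) / 2) ^ 2 / ((u * v - 1) / (u * v)) ^ 3
      = 2 * ((u + u⁻¹) / 2 - (v + v⁻¹) / 2) ^ 2 * (u * v) ^ 3 / (u * v - 1) ^ 3 := by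
    rw [div_pow, div_div_eq_mul_div]
  have t3 : 2 * (u * v) ^ 2 * ((u - u⁻¹) / 2) * ((v - v⁻¹) / 2)
        / ((u * v + 1) * (u * v - 1) / (u * v) / 2)
      = 2 * (u * v) ^ 2 * ((u - u⁻¹) / 2) * ((v - v⁻¹) / 2) * (u * v * 2)
        / ((u * v + 1) * (u * v - 1)) := by
    rw [div_div, div_div_eq_mul_div]
  rw [d1, d2, d3, d4, t1, t2, t3]
  exact helper_poly (u * v + 1) (u * v - 1) u v hu hv h1 h2 rfl rfl

theorem F_second_deriv_at_a_inv (ξ ξ' η η' : ℝ) (z z' a : ℂ)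
    (hz : z = (Real.sqrt 2 : ℂ) * Complex.cosh ((ξ : ℂ) + (η : ℂ) * Complex.I))
    (hz' : z' = (Real.sqrt 2 : ℂ) * Complex.cosh ((ξ' : ℂ) + (η' : ℂ) * Complex.I))
    (ha : a = Complex.exp (((ξ : ℂ) + (ξ' : ℂ)) + ((η : ℂ) + (η' : ℂ)) * Complex.I))
    (hz1 : z ≠ (Real.sqrt 2 : ℂ)) (hz2 : z ≠ -(Real.sqrt 2 : ℂ))
    (hz1' : z' ≠ (Real.sqrt 2 : ℂ)) (hz2' : z' ≠ -(Real.sqrt 2 : ℂ))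
    (hden : Complex.sinh (((ξ : ℂ) + (η : ℂ) * Complex.I) + ((ξ' : ℂ) + (η' : ℂ) * Complex.I)) ≠ 0) :
    -(z + z') ^ 2 / (1 + a⁻¹) ^ 3 - (z - z') ^ 2 / (1 - a⁻¹) ^ 3 + 1 / (a⁻¹) ^ 2 =
      2 * a ^ 2 * Complex.sinh ((ξ : ℂ) + (η : ℂ) * Complex.I) *
        Complex.sinh ((ξ' : ℂ) + (η' : ℂ) * Complex.I) /
        Complex.sinh (((ξ : ℂ) + (η : ℂ) * Complex.I) + ((ξ' : ℂ) + (η' : ℂ) * Complex.I)) := by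
  have hs2 : (Real.sqrt 2 : ℂ) * (Real.sqrt 2 : ℂ) = 2 := by
    rw [← Complex.ofReal_mul, Real.mul_self_sqrt (by norm_num : (0:ℝ) ≤ 2)]
    norm_num
  set w : ℂ := (ξ : ℂ) + (η : ℂ) * Complex.I with hw
  set w' : ℂ := (ξ' : ℂ) + (η' : ℂ) * Complex.I with hw'
  set u := Complex.exp w with hu_def
  set v := Complex.exp w' with hv_def
  have hu : u ≠ 0 := Complex.exp_ne_zero w
  have hv : v ≠ 0 := Complex.exp_ne_zero w'
  have ha' : a = u * v := by
    rw [ha, ← Complex.exp_add]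
    congr 1
    ring
  have hcosh : Complex.cosh w = (u + u⁻¹) / 2 := by
    simp only [Complex.cosh, Complex.exp_neg, hu_def]
  have hcosh' : Complex.cosh w' = (v + v⁻¹) / 2 := by
    simp only [Complex.cosh, Complex.exp_neg, hv_def]
  have hsinh : Complex.sinh w = (u - u⁻¹) / 2 := by
    simp only [Complex.sinh, Complex.exp_neg, hu_def]
  have hsinh' : Complex.sinh w' = (v - v⁻¹) / 2 := by
    simp only [Complex.sinh, Complex.exp_neg, hv_def]
  have hsinhsum : Complex.sinh (w + w') = (u * v - (u * v)⁻¹) / 2 := by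
    simp only [Complex.sinh, Complex.exp_neg, Complex.exp_add, hu_def, hv_def]
  have hden' : u * v - (u * v)⁻¹ ≠ 0 := by
    intro h
    apply hden
    rw [hsinhsum, h]
    norm_num
  have h1 : u * v + 1 ≠ 0 := by
    intro h
    apply hden'
    have huv : u * v = -1 := by linear_combination h
    rw [huv]
    norm_num
  have h2 : u * v - 1 ≠ 0 := by
    intro h
    apply hden'
    have huv : u * v = 1 := by linear_combination h
    rw [huv]
    norm_num
  have sq1 : ((Real.sqrt 2 : ℂ) * Complex.cosh w + (Real.sqrt 2 : ℂ) * Complex.cosh w') ^ 2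
      = 2 * (Complex.cosh w + Complex.cosh w') ^ 2 := by
    linear_combination (Complex.cosh w + Complex.cosh w') ^ 2 * hs2
  have sq2 : ((Real.sqrt 2 : ℂ) * Complex.cosh w - (Real.sqrt 2 : ℂ) * Complex.cosh w') ^ 2
      = 2 * (Complex.cosh w - Complex.cosh w') ^ 2 := by
    linear_combination (Complex.cosh w - Complex.cosh w') ^ 2 * hs2
  rw [hz, hz', ha', sq1, sq2, hcosh, hcosh', hsinh, hsinh', hsinhsum]
  exact key_identity u v hu hv h1 h2
end

section
/- Suppose ξ = ξ' > 0 and z = √2·cosh(ξ+iη), z' = √2·cosh(ξ+iη'). Then for all s on the circle |s| = |a|⁻¹ = e^{-2ξ} one has Re F(s) ≤ Re F(a⁻¹), with equality if and only if s = a⁻¹. -/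
noncomputable def Fphase (τ : ℝ) (z z' : ℂ) (s : ℂ) : ℂ :=
  s * (z + z') ^ 2 / (2 * (1 + s)) - s * (z - z') ^ 2 / (2 * (1 - s))
    - Complex.log s + Complex.log (τ : ℂ)

/-!
Put `t = a s`, so that `|t| = 1`, and `θ = (η - η') / 2`. Since `a = exp (u + v)` with
`u = ξ + iη`, `v = ξ + iη'`, the identities
`(cosh u + cosh v)² = cosh²((u - v)/2) (e^{u+v} + 1)² / e^{u+v}` and
`(cosh u - cosh v)² = sinh²((u - v)/2) (e^{u+v} - 1)² / e^{u+v}` give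
`(z + z')² = 2 cos²θ (a + 1)² / a` and `(z - z')² = -2 sin²θ (a - 1)² / a`, hence
`F = cos²θ · B₁ + sin²θ · B₋₁ - log s + log τ` with `B_c(s) = (a + c)² s / (a (1 + c s))`
(`phaseTerm c a s`). On the circle `Re log s` is constant, and
`B_c(a⁻¹) - B_c(a⁻¹ t) = (1 - t)(a + c)/(a + c t)` has real part `(|a|² - 1)(1 - Re t) / |a + c t|²`,
which is positive for `t ≠ 1` because `|a| = e^{2ξ} > 1`.
-/

open Complex

theorem Complex.re_lt_one_of_norm_eq_one {t : ℂ} (ht : ‖t‖ = 1) (ht1 : t ≠ 1) :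
    t.re < 1 := by
  have hsq : t.re * t.re + t.im * t.im = 1 := by
    rw [← normSq_apply, ← Complex.sq_norm, ht, one_pow]
  refine ((re_le_norm t).trans ht.le).lt_of_ne fun hre => ht1 ?_
  have him : t.im = 0 := by nlinarith
  exact Complex.ext (by simpa using hre) (by simpa using him)

theorem add_ne_zero_of_norm_lt {E : Type*} [SeminormedAddGroup E] {a b : E}
    (h : ‖b‖ < ‖a‖) : a + b ≠ 0 :=
  fun hab => h.not_ge (by rw [eq_neg_of_add_eq_zero_left hab, norm_neg])

theorem Complex.re_one_sub_mul_add_div {a c t : ℂ} (hc : ‖c‖ = 1) (ht : ‖t‖ = 1) :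
    ((1 - t) * (a + c) / (a + c * t)).re = (normSq a - 1) * (1 - t.re) / normSq (a + c * t) := by
  have hc' : c.re * c.re + c.im * c.im = 1 := by
    rw [← normSq_apply, ← Complex.sq_norm, hc, one_pow]
  have ht' : t.re * t.re + t.im * t.im = 1 := by
    rw [← normSq_apply, ← Complex.sq_norm, ht, one_pow]
  rw [div_re, ← add_div]
  congr 1
  simp only [mul_re, mul_im, sub_re, sub_im, add_re, add_im, one_re, one_im, normSq_apply]
  linear_combination
    (t.re - (t.re * t.re + t.im * t.im)) * hc' - (1 + a.re * c.re + a.im * c.im) * ht'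

theorem Complex.re_one_sub_mul_add_div_pos {a c t : ℂ} (ha : 1 < ‖a‖) (hc : ‖c‖ = 1)
    (ht : ‖t‖ = 1) (ht1 : t ≠ 1) : 0 < ((1 - t) * (a + c) / (a + c * t)).re := by
  have hact : a + c * t ≠ 0 := add_ne_zero_of_norm_lt (by rwa [norm_mul, hc, ht, one_mul])
  have hnorm : 1 < normSq a := by rw [← Complex.sq_norm]; nlinarith
  rw [re_one_sub_mul_add_div hc ht]
  exact div_pos (mul_pos (by linarith) (by linarith [re_lt_one_of_norm_eq_one ht ht1]))
    (normSq_pos.2 hact)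

noncomputable def phaseTerm (c a s : ℂ) : ℂ := (a + c) ^ 2 * s / (a * (1 + c * s))

theorem phaseTerm_inv_sub {c a t : ℂ} (ha : a ≠ 0) (hct : a + c * t ≠ 0) :
    phaseTerm c a a⁻¹ - phaseTerm c a (a⁻¹ * t) = (1 - t) * (a + c) / (a + c * t) := by
  unfold phaseTerm
  have h1 : 1 + c * a⁻¹ = (a + c) / a := by field_simp
  have h2 : 1 + c * (a⁻¹ * t) = (a + c * t) / a := by field_simp
  rw [h1, h2]
  field_simp
  ring

theorem Complex.cosh_add_cosh_sq (u v : ℂ) :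
    (cosh u + cosh v) ^ 2 = cosh ((u - v) / 2) ^ 2 * (exp (u + v) + 1) ^ 2 / exp (u + v) := by
  have hx : exp (u / 2) ≠ 0 := exp_ne_zero _
  have hy : exp (v / 2) ≠ 0 := exp_ne_zero _
  have hu : exp u = exp (u / 2) ^ 2 := by rw [sq, ← exp_add, add_halves]
  have hv : exp v = exp (v / 2) ^ 2 := by rw [sq, ← exp_add, add_halves]
  simp only [Complex.cosh, exp_neg, exp_add, sub_div, exp_sub, neg_sub, hu, hv]
  field_simp
  ring

theorem Complex.cosh_sub_cosh_sq (u v : ℂ) :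
    (cosh u - cosh v) ^ 2 = sinh ((u - v) / 2) ^ 2 * (exp (u + v) - 1) ^ 2 / exp (u + v) := by
  have hx : exp (u / 2) ≠ 0 := exp_ne_zero _
  have hy : exp (v / 2) ≠ 0 := exp_ne_zero _
  have hu : exp u = exp (u / 2) ^ 2 := by rw [sq, ← exp_add, add_halves]
  have hv : exp v = exp (v / 2) ^ 2 := by rw [sq, ← exp_add, add_halves]
  simp only [Complex.cosh, Complex.sinh, exp_neg, exp_add, sub_div, exp_sub, neg_sub, hu, hv]
  field_simp
  ring

theorem re_phaseTerm_comb_sub_log_lt {a s : ℂ} {C D : ℝ} (ha : 1 < ‖a‖) (hC : 0 ≤ C)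
    (hD : 0 ≤ D) (hCD : 0 < C + D) (hs : ‖s‖ = ‖a‖⁻¹) (hsa : s ≠ a⁻¹) :
    (C * phaseTerm 1 a s + D * phaseTerm (-1) a s - log s).re
      < (C * phaseTerm 1 a a⁻¹ + D * phaseTerm (-1) a a⁻¹ - log a⁻¹).re := by
  have ha0 : a ≠ 0 := norm_pos_iff.1 (one_pos.trans ha)
  set t := a * s
  have hst : s = a⁻¹ * t := (inv_mul_cancel_left₀ ha0 s).symm
  have ht : ‖t‖ = 1 := by rw [norm_mul, hs, mul_inv_cancel₀ (norm_ne_zero_iff.2 ha0)]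
  have ht1 : t ≠ 1 := fun h => hsa (by rw [hst, h, mul_one])
  have hgap : ∀ c : ℂ, ‖c‖ = 1 → 0 < (phaseTerm c a a⁻¹ - phaseTerm c a s).re := by
    intro c hc
    have hact : a + c * t ≠ 0 := add_ne_zero_of_norm_lt (by rwa [norm_mul, hc, ht, one_mul])
    rw [hst, phaseTerm_inv_sub ha0 hact]
    exact re_one_sub_mul_add_div_pos ha hc ht ht1
  have hlog : (log s).re = (log a⁻¹).re := by rw [log_re, log_re, hs, norm_inv]
  have h₁ := hgap 1 norm_one
  have h₂ := hgap (-1) (by rw [norm_neg, norm_one])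
  simp only [sub_re, add_re, re_ofReal_mul] at h₁ h₂ ⊢
  rcases hC.eq_or_lt with rfl | hC
  · nlinarith
  · nlinarith [mul_pos hC h₁, mul_nonneg hD h₂.le]

theorem Fphase_eq_phaseTerm {τ C D : ℝ} {z z' a : ℂ}
    (hplus : (z + z') ^ 2 = 2 * C * (a + 1) ^ 2 / a)
    (hminus : (z - z') ^ 2 = -2 * D * (a - 1) ^ 2 / a) (s : ℂ) :
    Fphase τ z z' s = C * phaseTerm 1 a s + D * phaseTerm (-1) a s - log s + log τ := by
  simp only [Fphase, hplus, hminus, phaseTerm, one_mul, neg_one_mul, ← sub_eq_add_neg,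
    div_eq_mul_inv, mul_inv]
  ring

theorem ReF_max_on_circle_same_ellipse_general (τ ξ η η' : ℝ)
    (hξ : 0 < ξ) (z z' a : ℂ)
    (hz : z = (Real.sqrt 2 : ℂ) * Complex.cosh ((ξ : ℂ) + (η : ℂ) * Complex.I))
    (hz' : z' = (Real.sqrt 2 : ℂ) * Complex.cosh ((ξ : ℂ) + (η' : ℂ) * Complex.I))
    (ha : a = Complex.exp ((2 * ξ : ℂ) + ((η : ℂ) + (η' : ℂ)) * Complex.I)) :
    ∀ s : ℂ, ‖s‖ = Real.exp (-2 * ξ) →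
      (Fphase τ z z' s).re ≤ (Fphase τ z z' a⁻¹).re ∧
      ((Fphase τ z z' s).re = (Fphase τ z z' a⁻¹).re ↔ s = a⁻¹) := by
  intro s hs
  set θ := (η - η') / 2
  have hnorm : ‖a‖ = Real.exp (2 * ξ) := by rw [ha, norm_exp]; simp
  have hsum : ((ξ : ℂ) + η * I) + (ξ + η' * I) = 2 * ξ + (η + η') * I := by ring
  have hhalf : (((ξ : ℂ) + η * I) - (ξ + η' * I)) / 2 = θ * I := by push_cast [θ]; ring
  have hsqrt : ((Real.sqrt 2 : ℝ) : ℂ) ^ 2 = 2 := by norm_cast; exact Real.sq_sqrt zero_le_two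
  have hplus : (z + z') ^ 2 = 2 * (Real.cos θ ^ 2 : ℝ) * (a + 1) ^ 2 / a := by
    rw [hz, hz', ← mul_add, mul_pow, hsqrt, cosh_add_cosh_sq, hsum, hhalf, cosh_mul_I, ← ha]
    push_cast; ring
  have hminus : (z - z') ^ 2 = -2 * (Real.sin θ ^ 2 : ℝ) * (a - 1) ^ 2 / a := by
    rw [hz, hz', ← mul_sub, mul_pow, hsqrt, cosh_sub_cosh_sq, hsum, hhalf, sinh_mul_I, ← ha,
      mul_pow, I_sq]
    push_cast; ring
  have hF := Fphase_eq_phaseTerm (τ := τ) hplus hminus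
  rw [hF, hF]
  by_cases hsa : s = a⁻¹
  · simp [hsa]
  have hlt := re_phaseTerm_comb_sub_log_lt (by rw [hnorm, Real.one_lt_exp_iff]; positivity)
    (sq_nonneg (Real.cos θ)) (sq_nonneg (Real.sin θ))
    (by rw [Real.cos_sq_add_sin_sq]; exact one_pos)
    (by rw [hs, hnorm, ← Real.exp_neg, neg_mul]) hsa
  simp only [add_re] at hlt ⊢
  exact ⟨by linarith, iff_of_false (by linarith) hsa⟩

theorem ReF_max_on_circle_same_ellipse (τ ξ η η' : ℝ) (hτ : 0 < τ) (hτ1 : τ ≤ 1)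
    (hξ : 0 < ξ) (z z' a : ℂ)
    (hz : z = (Real.sqrt 2 : ℂ) * Complex.cosh ((ξ : ℂ) + (η : ℂ) * Complex.I))
    (hz' : z' = (Real.sqrt 2 : ℂ) * Complex.cosh ((ξ : ℂ) + (η' : ℂ) * Complex.I))
    (ha : a = Complex.exp ((2 * ξ : ℂ) + ((η : ℂ) + (η' : ℂ)) * Complex.I)) :
    ∀ s : ℂ, ‖s‖ = Real.exp (-2 * ξ) →
      (Fphase τ z z' s).re ≤ (Fphase τ z z' a⁻¹).re ∧
      ((Fphase τ z z' s).re = (Fphase τ z z' a⁻¹).re ↔ s = a⁻¹) :=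
  ReF_max_on_circle_same_ellipse_general τ ξ η η' hξ z z' a hz hz' ha
end

section
/- If ξ = ξ' = 0, i.e. z = √2·cos η and z' = √2·cos η', then Re F(e^{it}) = 1 + ½cos 2η + ½cos 2η' + log τ for all t ∈ (−π, π], i.e. Re F is constant on the unit circle and equals Re F(a⁻¹). -/
/-!
On the unit circle `s / (1 + s)` has real part `1/2` and `s / (1 - s)` has real part `-1/2`,
while `log s` is purely imaginary. For real `z, z'` the real part of `F(s)` is therefore
`(z + z')² / 4 + (z - z')² / 4 + log τ = (z² + z'²) / 2 + log τ`, independent of `s`,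
and `z² = 2 cos² η = 1 + cos 2η`.
-/

open ComplexConjugate

namespace Complex

variable {s : ℂ}

-- `conj (s / (1 + s)) = s⁻¹ / (1 + s⁻¹) = 1 / (1 + s)`, and the two add up to `1`.
theorem re_div_one_add_of_norm_eq_one (hs : ‖s‖ = 1) (hs_neg : s ≠ -1) :
    (s / (1 + s)).re = 1 / 2 := by
  have hs₀ : s ≠ 0 := norm_ne_zero_iff.mp (by rw [hs]; exact one_ne_zero)
  have h1s : 1 + s ≠ 0 := fun h => hs_neg (by linear_combination h)
  have hsum : s / (1 + s) + s⁻¹ / (1 + s⁻¹) = 1 := by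
    rw [← mul_div_mul_left s⁻¹ _ hs₀, mul_add, mul_inv_cancel₀ hs₀, mul_one, add_comm s 1,
      ← add_div, add_comm, div_self h1s]
  apply ofReal_injective
  rw [re_eq_add_conj, map_div₀, map_add, map_one, ← inv_eq_conj hs, hsum]
  norm_num

theorem re_div_one_sub_of_norm_eq_one (hs : ‖s‖ = 1) (hs_one : s ≠ 1) :
    (s / (1 - s)).re = -1 / 2 := by
  have h := re_div_one_add_of_norm_eq_one (s := -s) (by rwa [norm_neg]) (by simpa using hs_one)
  rw [← sub_eq_add_neg, neg_div, neg_re] at h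
  linarith

theorem log_re_of_norm_eq_one (hs : ‖s‖ = 1) : (log s).re = 0 := by
  rw [log_re, hs, Real.log_one]

end Complex

open Complex in
theorem re_Fphase_of_norm_eq_one (τ x y : ℝ) {s : ℂ} (hs : ‖s‖ = 1) (hs_one : s ≠ 1)
    (hs_neg : s ≠ -1) :
    (Fphase τ x y s).re = (x ^ 2 + y ^ 2) / 2 + Real.log τ := by
  have hplus : s * ((x : ℂ) + y) ^ 2 / (2 * (1 + s))
      = ((x + y) ^ 2 / 2 : ℝ) * (s / (1 + s)) := by
    push_cast; rw [div_mul_div_comm, mul_comm s]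
  have hminus : s * ((x : ℂ) - y) ^ 2 / (2 * (1 - s))
      = ((x - y) ^ 2 / 2 : ℝ) * (s / (1 - s)) := by
    push_cast; rw [div_mul_div_comm, mul_comm s]
  rw [Fphase, add_re, sub_re, sub_re, hplus, hminus, re_ofReal_mul, re_ofReal_mul,
    re_div_one_add_of_norm_eq_one hs hs_neg, re_div_one_sub_of_norm_eq_one hs hs_one,
    log_re_of_norm_eq_one hs, log_ofReal_re]
  ring

theorem sq_sqrt_two_mul_cos (η : ℝ) :
    (Real.sqrt 2 * Real.cos η) ^ 2 = 1 + Real.cos (2 * η) := by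
  rw [mul_pow, Real.sq_sqrt zero_le_two, Real.cos_sq]
  ring

theorem ReF_constant_on_unit_circle_general (τ η η' : ℝ)
    (z z' : ℂ)
    (hz : z = (Real.sqrt 2 * Real.cos η : ℝ))
    (hz' : z' = (Real.sqrt 2 * Real.cos η' : ℝ)) :
    ∀ t : ℝ, -Real.pi < t → t ≤ Real.pi →
      Complex.exp (Complex.I * t) ≠ 1 → Complex.exp (Complex.I * t) ≠ -1 →
      (Fphase τ z z' (Complex.exp (Complex.I * t))).re =
        1 + Real.cos (2 * η) / 2 + Real.cos (2 * η') / 2 + Real.log τ := by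
  intro t _ _ hs_one hs_neg
  have hs : ‖Complex.exp (Complex.I * t)‖ = 1 := by
    rw [mul_comm]
    exact Complex.norm_exp_ofReal_mul_I t
  rw [hz, hz', re_Fphase_of_norm_eq_one τ _ _ hs hs_one hs_neg, sq_sqrt_two_mul_cos,
    sq_sqrt_two_mul_cos]
  ring

theorem ReF_constant_on_unit_circle (τ η η' : ℝ) (hτ : 0 < τ) (hτ1 : τ ≤ 1)
    (z z' : ℂ)
    (hz : z = (Real.sqrt 2 * Real.cos η : ℝ))
    (hz' : z' = (Real.sqrt 2 * Real.cos η' : ℝ)) :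
    ∀ t : ℝ, -Real.pi < t → t ≤ Real.pi →
      Complex.exp (Complex.I * t) ≠ 1 → Complex.exp (Complex.I * t) ≠ -1 →
      (Fphase τ z z' (Complex.exp (Complex.I * t))).re =
        1 + Real.cos (2 * η) / 2 + Real.cos (2 * η') / 2 + Real.log τ :=
  ReF_constant_on_unit_circle_general τ η η' z z' hz hz'
end

section
/- Re(conj(sinh(ξ+iη+ξ'+iη'))·sinh(ξ+iη)·sinh(ξ'+iη')) = ½|sinh(ξ+iη)|²·sinh(2ξ') + ½|sinh(ξ'+iη')|²·sinh(2ξ). In particular this real part is strictly positive when ξ, ξ' > 0. -/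
/-!
Expanding `sinh (z + w) = sinh z cosh w + cosh z sinh w` gives
`conj (sinh (z + w)) sinh z sinh w = |sinh z|² conj (cosh w) sinh w + |sinh w|² conj (cosh z) sinh z`,
and by the product-to-sum formula
`2 conj (cosh w) sinh w = sinh (w + conj w) + sinh (w - conj w) = sinh (2 Re w) + i sin (2 Im w)`,
whose real part is `sinh (2 Re w)`. Positivity follows since `sinh z ≠ 0` when `Re z ≠ 0`.
-/

open Complex ComplexConjugate

namespace Complex

theorem re_conj_cosh_mul_sinh (w : ℂ) : (conj (cosh w) * sinh w).re = Real.sinh (2 * w.re) / 2 := by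
  have h : 2 * (conj (cosh w) * sinh w) = sinh (w + conj w) + sinh (w - conj w) := by
    rw [← cosh_conj, sinh_add, sinh_sub]
    ring
  have h2 : (2 * (conj (cosh w) * sinh w)).re = Real.sinh (2 * w.re) := by
    rw [h, add_conj, sub_conj, sinh_mul_I, ← ofReal_sin, add_re, sinh_ofReal_re,
      re_ofReal_mul, I_re, mul_zero, add_zero]
  rw [← h2]
  simp

theorem sinh_ne_zero_of_re_ne_zero {z : ℂ} (hz : z.re ≠ 0) : sinh z ≠ 0 := by
  intro h
  have h0 := re_conj_cosh_mul_sinh z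
  simp only [h, mul_zero, zero_re] at h0
  exact hz (by simpa using h0.symm)

theorem conj_sinh_add_mul_sinh_mul_sinh (z w : ℂ) :
    conj (sinh (z + w)) * sinh z * sinh w =
      (‖sinh z‖ ^ 2 : ℝ) * (conj (cosh w) * sinh w)
        + (‖sinh w‖ ^ 2 : ℝ) * (conj (cosh z) * sinh z) := by
  rw [sinh_add, ofReal_pow, ofReal_pow, ← mul_conj', ← mul_conj']
  simp only [map_add, map_mul]
  ring

theorem re_conj_sinh_add_mul_sinh_mul_sinh (z w : ℂ) :
    (conj (sinh (z + w)) * sinh z * sinh w).re =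
      1 / 2 * ‖sinh z‖ ^ 2 * Real.sinh (2 * w.re) + 1 / 2 * ‖sinh w‖ ^ 2 * Real.sinh (2 * z.re) := by
  rw [conj_sinh_add_mul_sinh_mul_sinh, add_re, re_ofReal_mul, re_ofReal_mul,
    re_conj_cosh_mul_sinh, re_conj_cosh_mul_sinh]
  ring

theorem re_conj_sinh_add_mul_sinh_mul_sinh_pos {z w : ℂ} (hz : 0 < z.re) (hw : 0 < w.re) :
    0 < (conj (sinh (z + w)) * sinh z * sinh w).re := by
  rw [re_conj_sinh_add_mul_sinh_mul_sinh]
  have hsz := norm_pos_iff.2 (sinh_ne_zero_of_re_ne_zero hz.ne')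
  have hsw := norm_pos_iff.2 (sinh_ne_zero_of_re_ne_zero hw.ne')
  positivity

end Complex

theorem re_conj_sinh_product (ξ ξ' η η' : ℝ) :
    ((starRingEnd ℂ) (Complex.sinh (((ξ : ℂ) + (η : ℂ) * Complex.I)
          + ((ξ' : ℂ) + (η' : ℂ) * Complex.I))) *
        Complex.sinh ((ξ : ℂ) + (η : ℂ) * Complex.I) *
        Complex.sinh ((ξ' : ℂ) + (η' : ℂ) * Complex.I)).re =
      (1 / 2) * (‖Complex.sinh ((ξ : ℂ) + (η : ℂ) * Complex.I)‖) ^ 2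
          * Real.sinh (2 * ξ')
        + (1 / 2) * (‖Complex.sinh ((ξ' : ℂ) + (η' : ℂ) * Complex.I)‖) ^ 2
          * Real.sinh (2 * ξ) ∧
    (0 < ξ → 0 < ξ' →
      0 < ((starRingEnd ℂ) (Complex.sinh (((ξ : ℂ) + (η : ℂ) * Complex.I)
          + ((ξ' : ℂ) + (η' : ℂ) * Complex.I))) *
        Complex.sinh ((ξ : ℂ) + (η : ℂ) * Complex.I) *
        Complex.sinh ((ξ' : ℂ) + (η' : ℂ) * Complex.I)).re) := by
  have hre (x y : ℝ) : ((x : ℂ) + (y : ℂ) * I).re = x := by simp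
  refine ⟨?_, fun hξ hξ' => ?_⟩
  · rw [re_conj_sinh_add_mul_sinh_mul_sinh, hre, hre]
  · exact re_conj_sinh_add_mul_sinh_mul_sinh_pos (by rwa [hre]) (by rwa [hre])
end

section
/- For the weight ω(Z) = exp(−(Re Z)²/(1+τ) − (Im Z)²/(1−τ)) and F(τ; z, z'; s) as above with z = Z/√(2τ), z' = conj(Z')/√(2τ), the following holds for all n ≥ 1 and Z, Z' ∈ ℂ: |√(ω(√n Z)ω(√n Z'))·e^{nF(τ)}| = exp(−(n/2)|Z−Z'|²/(1−τ²)). -/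
/-!
The rescaling `z = Z / √(2τ)`, `z' = conj Z' / √(2τ)` turns `F(τ)` into
`(Z + conj Z')² / (4(1+τ)) - (Z - conj Z')² / (4(1-τ))`, and with `Z = x + iy`, `Z' = x' + iy'`
one has `Re (Z + conj Z')² = 2(x² + x'²) - |Z - Z'|²`, `Re (Z - conj Z')² = |Z - Z'|² - 2(y² + y'²)`.
So `Re F(τ)` is half the exponent of `1 / (ω(Z) ω(Z'))` minus `|Z - Z'|² / (2(1 - τ²))`: the weight
cancels exactly and only the Gaussian in `Z - Z'` survives.
-/

/-- The elliptic Ginibre weight. -/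
noncomputable def wfun (τ : ℝ) (Z : ℂ) : ℝ :=
  Real.exp (-(Z.re) ^ 2 / (1 + τ) - (Z.im) ^ 2 / (1 - τ))

open Complex ComplexConjugate

noncomputable def ellipticForm (τ : ℝ) (Z : ℂ) : ℝ :=
  Z.re ^ 2 / (1 + τ) + Z.im ^ 2 / (1 - τ)

lemma wfun_eq_exp_neg_ellipticForm (τ : ℝ) (Z : ℂ) :
    wfun τ Z = Real.exp (-ellipticForm τ Z) := by
  rw [wfun, ellipticForm]
  ring_nf

lemma ellipticForm_ofReal_mul (τ a : ℝ) (Z : ℂ) :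
    ellipticForm τ (a * Z) = a ^ 2 * ellipticForm τ Z := by
  simp only [ellipticForm, re_ofReal_mul, im_ofReal_mul]
  ring

lemma re_add_conj_sq (Z W : ℂ) :
    ((Z + conj W) ^ 2).re = 2 * (Z.re ^ 2 + W.re ^ 2) - ‖Z - W‖ ^ 2 := by
  rw [Complex.sq_norm, normSq_apply]
  simp only [sq, mul_re, add_re, add_im, conj_re, conj_im, sub_re, sub_im]
  ring

lemma re_sub_conj_sq (Z W : ℂ) :
    ((Z - conj W) ^ 2).re = ‖Z - W‖ ^ 2 - 2 * (Z.im ^ 2 + W.im ^ 2) := by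
  rw [Complex.sq_norm, normSq_apply]
  simp only [sq, mul_re, sub_re, sub_im, conj_re, conj_im]
  ring

lemma rescaled_exponent_eq {τ : ℝ} (hτ0 : 0 < τ) (hτ1 : τ ≠ 1) (Z W : ℂ) :
    (τ : ℂ) * (Z / (√(2 * τ) : ℂ) + W / (√(2 * τ) : ℂ)) ^ 2 / (2 * (1 + (τ : ℂ)))
        - (τ : ℂ) * (Z / (√(2 * τ) : ℂ) - W / (√(2 * τ) : ℂ)) ^ 2 / (2 * (1 - (τ : ℂ)))
      = (Z + W) ^ 2 / ((4 * (1 + τ) : ℝ) : ℂ) - (Z - W) ^ 2 / ((4 * (1 - τ) : ℝ) : ℂ) := by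
  have hsqrt : ((√(2 * τ) : ℝ) : ℂ) ^ 2 = 2 * τ := by
    rw [← ofReal_pow, Real.sq_sqrt (by positivity)]; push_cast; rfl
  have hτ : (τ : ℂ) ≠ 0 := ofReal_ne_zero.mpr hτ0.ne'
  have hplus : 1 + (τ : ℂ) ≠ 0 := by exact_mod_cast (by linarith : (1 + τ) ≠ 0)
  have hminus : 1 - (τ : ℂ) ≠ 0 := by exact_mod_cast sub_ne_zero.mpr hτ1.symm
  rw [← add_div, ← sub_div, div_pow, div_pow, hsqrt]
  push_cast
  field_simp
  ring

lemma re_rescaled_exponent {τ : ℝ} (hτ0 : 0 < τ) (hτ1 : τ < 1) (Z Z' : ℂ) :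
    ((τ : ℂ) * (Z / (√(2 * τ) : ℂ) + conj Z' / (√(2 * τ) : ℂ)) ^ 2 / (2 * (1 + (τ : ℂ)))
        - (τ : ℂ) * (Z / (√(2 * τ) : ℂ) - conj Z' / (√(2 * τ) : ℂ)) ^ 2 / (2 * (1 - (τ : ℂ)))).re
      = (ellipticForm τ Z + ellipticForm τ Z') / 2 - ‖Z - Z'‖ ^ 2 / (1 - τ ^ 2) / 2 := by
  rw [rescaled_exponent_eq hτ0 hτ1.ne, sub_re, div_ofReal_re, div_ofReal_re, re_add_conj_sq,
    re_sub_conj_sq, ellipticForm, ellipticForm]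
  have hminus : 1 - τ ≠ 0 := by linarith
  have hsq : 1 - τ ^ 2 ≠ 0 := by nlinarith
  field_simp
  ring

theorem weight_times_eFtau_abs_general (τ : ℝ) (hτ0 : 0 < τ) (hτ1 : τ < 1)
    (n : ℕ) (Z Z' : ℂ) :
    let z : ℂ := Z / (Real.sqrt (2 * τ) : ℂ)
    let z' : ℂ := (starRingEnd ℂ) Z' / (Real.sqrt (2 * τ) : ℂ)
    let Fτ : ℂ := (τ : ℂ) * (z + z') ^ 2 / (2 * (1 + (τ : ℂ)))
      - (τ : ℂ) * (z - z') ^ 2 / (2 * (1 - (τ : ℂ)))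
    Real.sqrt (wfun τ ((Real.sqrt n : ℂ) * Z) * wfun τ ((Real.sqrt n : ℂ) * Z'))
        * ‖Complex.exp ((n : ℂ) * Fτ)‖
      = Real.exp (-((n : ℝ) / 2) * ‖Z - Z'‖ ^ 2 / (1 - τ ^ 2)) := by
  intro z z' Fτ
  have hF : Fτ.re = (ellipticForm τ Z + ellipticForm τ Z') / 2 - ‖Z - Z'‖ ^ 2 / (1 - τ ^ 2) / 2 :=
    re_rescaled_exponent hτ0 hτ1 Z Z'
  rw [wfun_eq_exp_neg_ellipticForm, wfun_eq_exp_neg_ellipticForm, ellipticForm_ofReal_mul,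
    ellipticForm_ofReal_mul, Real.sq_sqrt n.cast_nonneg, ← Real.exp_add, ← Real.exp_half,
    norm_exp, ← ofReal_natCast, re_ofReal_mul, hF, ← Real.exp_add]
  congr 1
  ring

theorem weight_times_eFtau_abs (τ : ℝ) (hτ0 : 0 < τ) (hτ1 : τ < 1)
    (n : ℕ) (hn : 1 ≤ n) (Z Z' : ℂ) :
    let z : ℂ := Z / (Real.sqrt (2 * τ) : ℂ)
    let z' : ℂ := (starRingEnd ℂ) Z' / (Real.sqrt (2 * τ) : ℂ)
    let Fτ : ℂ := (τ : ℂ) * (z + z') ^ 2 / (2 * (1 + (τ : ℂ)))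
      - (τ : ℂ) * (z - z') ^ 2 / (2 * (1 - (τ : ℂ)))
    Real.sqrt (wfun τ ((Real.sqrt n : ℂ) * Z) * wfun τ ((Real.sqrt n : ℂ) * Z'))
        * ‖Complex.exp ((n : ℂ) * Fτ)‖
      = Real.exp (-((n : ℝ) / 2) * ‖Z - Z'‖ ^ 2 / (1 - τ ^ 2)) :=
  weight_times_eFtau_abs_general τ hτ0 hτ1 n Z Z'
end
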